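/- For every real x ≠ 0 and y ≥ 0, lim_{n→∞} HL_n(x, y/n²)/x^n = Σ_{r=0}^∞ (y/x²)^r / (r!)², i.e., the modified Bessel value I_0(2√y/|x|)-type series. -/

import Mathlib

/-! With `z = y / x ^ 2`, dividing by `x ^ n` gives
`HL_n(x, y / n²) / x ^ n = ∑ r, (n.descFactorial (2r) / n ^ (2r)) · z ^ r / (r!)²`,
a series over all `r` because the falling factorial vanishes for `2r > n`. The weights lie in
`[0, 1]` and tend to `1` (`n.descFactorial k ~ n ^ k`), and `∑ |z| ^ r / (r!)²` converges, so by
Tannery's theorem the limit can be taken term by term. -/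

/-- Hybrid Laguerre–Hermite polynomials. -/
noncomputable def hybridLH (n : ℕ) (x y : ℝ) : ℝ :=
  (Nat.factorial n : ℝ) * ∑ r ∈ Finset.range (n / 2 + 1),
    x ^ (n - 2 * r) * y ^ r / ((Nat.factorial (n - 2 * r) : ℝ) * (Nat.factorial r : ℝ) ^ 2)

open Filter Topology Nat Asymptotics

theorem tendsto_tsum_smul_of_norm_le_one {𝕜 E : Type*} [NormedField 𝕜] [NormedAddCommGroup E]
    [NormedSpace 𝕜 E] [CompleteSpace E] {g : ℕ → E} (hg : Summable (‖g ·‖))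
    {c : ℕ → ℕ → 𝕜} (hc : ∀ n r, ‖c n r‖ ≤ 1) (hlim : ∀ r, Tendsto (c · r) atTop (𝓝 1)) :
    Tendsto (fun n ↦ ∑' r, c n r • g r) atTop (𝓝 (∑' r, g r)) := by
  refine tendsto_tsum_of_dominated_convergence hg (fun r ↦ ?_) (.of_forall fun n r ↦ ?_)
  · simpa using (hlim r).smul_const (g r)
  · simpa [norm_smul] using mul_le_of_le_one_left (norm_nonneg _) (hc n r)

theorem descFactorial_div_pow_le_one (n k : ℕ) : (n.descFactorial k : ℝ) / n ^ k ≤ 1 :=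
  div_le_one_of_le₀ (mod_cast n.descFactorial_le_pow k) (by positivity)

theorem tendsto_descFactorial_div_pow (k : ℕ) :
    Tendsto (fun n : ℕ ↦ (n.descFactorial k : ℝ) / n ^ k) atTop (𝓝 1) :=
  (isEquivalent_iff_tendsto_one ((eventually_ne_atTop 0).mono fun n hn ↦ by positivity)).mp
    (isEquivalent_descFactorial k)

theorem summable_norm_pow_div_factorial_sq (z : ℝ) :
    Summable (fun r ↦ ‖z ^ r / (r ! : ℝ) ^ 2‖) := by
  refine (Real.summable_pow_div_factorial ‖z‖).of_nonneg_of_le (fun r ↦ norm_nonneg _) fun r ↦ ?_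
  have hr : (1 : ℝ) ≤ r ! := mod_cast r.factorial_pos
  rw [norm_div, norm_pow, norm_pow, Real.norm_natCast]
  exact div_le_div_of_nonneg_left (by positivity) (by positivity) (by nlinarith)

theorem hybridLH_div_pow (n : ℕ) (x y : ℝ) (hx : x ≠ 0) :
    hybridLH n x y / x ^ n =
      ∑' r, (n.descFactorial (2 * r) : ℝ) * ((y / x ^ 2) ^ r / (r ! : ℝ) ^ 2) := by
  rw [tsum_eq_sum (s := Finset.range (n / 2 + 1)) fun r hr ↦ ?_, hybridLH, Finset.mul_sum,
    Finset.sum_div]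
  · refine Finset.sum_congr rfl fun r hr ↦ ?_
    have h2r : 2 * r ≤ n := by rw [Finset.mem_range] at hr; omega
    rw [← factorial_mul_descFactorial h2r, ← Nat.sub_add_cancel h2r, pow_add,
      Nat.add_sub_cancel, div_pow, ← pow_mul]
    push_cast
    field_simp
  · have : n < 2 * r := by rw [Finset.mem_range] at hr; omega
    simp [descFactorial_eq_zero_iff_lt.mpr this]

theorem stmt11_general (x y : ℝ) (hx : x ≠ 0) :
    Filter.Tendsto (fun n : ℕ => hybridLH n x (y / (n : ℝ) ^ 2) / x ^ n) Filter.atTop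
      (nhds (∑' r : ℕ, (y / x ^ 2) ^ r / (Nat.factorial r : ℝ) ^ 2)) := by
  have h := tendsto_tsum_smul_of_norm_le_one (summable_norm_pow_div_factorial_sq (y / x ^ 2))
    (c := fun n r ↦ (n.descFactorial (2 * r) : ℝ) / n ^ (2 * r))
    (fun n r ↦ by
      rw [Real.norm_of_nonneg (by positivity)]; exact descFactorial_div_pow_le_one n (2 * r))
    (fun r ↦ tendsto_descFactorial_div_pow (2 * r))
  refine h.congr fun n ↦ ?_
  rw [hybridLH_div_pow n x _ hx]
  refine tsum_congr fun r ↦ ?_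
  simp only [smul_eq_mul, div_div, div_pow, mul_pow, ← pow_mul]
  ring

theorem stmt11 (x y : ℝ) (hx : x ≠ 0) (hy : 0 ≤ y) :
    Filter.Tendsto (fun n : ℕ => hybridLH n x (y / (n : ℝ) ^ 2) / x ^ n) Filter.atTop
      (nhds (∑' r : ℕ, (y / x ^ 2) ^ r / (Nat.factorial r : ℝ) ^ 2)) :=
  stmt11_general x y hx
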